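/- arXiv:2308.14660 — 4 statements merged into one kernel-verified Lean document; each statement's English description precedes it below -/
import Mathlib

section
/- Let Ω ⊆ ℝ² be measurable and f : Ω → ℝ satisfy the weak-L⁴ bound |{x ∈ Ω : |f(x)|⁴ ≥ M}| ≤ C/M for all M ≥ 1 (with C ≥ 1). Then for every ε > 0 the set D_ε = {x ∈ Ω : liminf_{r→0} (1/r)∫_{B_r(x)} f² ≥ ε} contains at most 2¹¹C²π²/ε⁴ points. -/
/-!
Around a point of `D_ε` the mass `∫_{B_r(x)} f²` is at least `ε r / 2` for all small `r`. Split
it according to the size of `f²`: the part where `f² < λ := ε / (4π r)` contributes at most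
`π r² λ = ε r / 4`, and by the layer-cake formula the weak-`L⁴` bound (a weak-`L²` bound for `f²`)
gives `∫_{f² ≥ K} f² ≤ 2C / K = ε r / 8` for `K := 16 C / (ε r)`. Hence the superlevel set
`{f² ≥ λ}` occupies measure at least `ε r / (8K)` of each ball. Balls around distinct points of
`D_ε` are disjoint for small `r`, so `N ε r / 8 ≤ K · C / λ²`, i.e. `N ≤ 2¹¹ C² π² / ε⁴`.
-/

open Real MeasureTheory Set Filter

open scoped ENNReal Topology

-- `0 ≤ b` is needed because `liminf u l = 0` in `ℝ` when `u` is not bounded below.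
theorem Real.eventually_lt_of_lt_liminf {β : Type*} {l : Filter β} {u : β → ℝ} {b : ℝ}
    (hb : 0 ≤ b) (h : b < liminf u l) : ∀ᶠ x in l, b < u x := by
  by_cases hbdd : IsBoundedUnder (· ≥ ·) l u
  · exact Filter.eventually_lt_of_lt_liminf h hbdd
  · rw [Real.liminf_of_not_isBoundedUnder hbdd] at h
    exact absurd h hb.not_gt

theorem Finset.eventually_pairwiseDisjoint_ball {X : Type*} [MetricSpace X] (S : Finset X) :
    ∀ᶠ r in 𝓝 (0 : ℝ), (S : Set X).PairwiseDisjoint (Metric.ball · r) := by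
  have h : ∀ᶠ r in 𝓝 (0 : ℝ), ∀ x ∈ S, ∀ y ∈ S, x ≠ y → r + r ≤ dist x y := by
    simp only [eventually_all_finset]
    intro x _ y _
    by_cases hxy : x = y
    · exact Eventually.of_forall fun _ h => absurd hxy h
    · filter_upwards [eventually_le_nhds (half_pos (dist_pos.2 hxy))] with r hr _
      linarith
  filter_upwards [h] with r hr x hx y hy hxy
  exact Metric.ball_disjoint_ball (hr x hx y hy hxy)

theorem Finset.exists_small_radius_of_le_liminf {X : Type*} [MetricSpace X] (S : Finset X)
    {I : X → ℝ → ℝ} {ε a : ℝ} (hε : 0 < ε) (ha : 0 < a)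
    (hS : ∀ x ∈ S, ε ≤ liminf (fun r => 1 / r * I x r) (𝓝[>] 0)) :
    ∃ r, 0 < r ∧ r ≤ a ∧ (S : Set X).PairwiseDisjoint (Metric.ball · r) ∧
      ∀ x ∈ S, ε * r / 2 ≤ I x r := by
  have hmass : ∀ᶠ r in 𝓝[>] (0 : ℝ), ∀ x ∈ S, ε / 2 < 1 / r * I x r :=
    (eventually_all_finset S).2 fun x hx =>
      Real.eventually_lt_of_lt_liminf (by positivity) (by linarith [hS x hx])
  obtain ⟨r, hr, ⟨hra, hdisj⟩, hmass⟩ := (eventually_mem_nhdsWithin.and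
    ((eventually_nhdsWithin_of_eventually_nhds ((eventually_le_nhds ha).and
      S.eventually_pairwiseDisjoint_ball)).and hmass)).exists
  refine ⟨r, hr, hra, hdisj, fun x hx => ?_⟩
  have := hmass x hx
  rw [one_div, inv_mul_eq_div, lt_div_iff₀ hr] at this
  linarith

theorem lintegral_Ioi_ofReal_div_sq {C K : ℝ} (hC : 0 ≤ C) (hK : 0 < K) :
    ∫⁻ t in Ioi K, ENNReal.ofReal (C / t ^ 2) = ENNReal.ofReal (C / K) := by
  have hrpow : EqOn (fun t : ℝ => C / t ^ 2) (fun t => C * t ^ (-2 : ℝ)) (Ioi K) := by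
    intro t ht
    simp only [Real.rpow_neg (hK.trans ht).le, Real.rpow_two, div_eq_mul_inv]
  rw [setLIntegral_congr_fun measurableSet_Ioi (fun t ht => congrArg ENNReal.ofReal (hrpow ht)),
    ← ofReal_integral_eq_lintegral_ofReal, integral_const_mul,
    integral_Ioi_rpow_of_lt (by norm_num) hK]
  · norm_num [Real.rpow_neg_one, div_eq_mul_inv]
  · exact (integrableOn_Ioi_rpow_of_lt (by norm_num) hK).const_mul C
  · filter_upwards [ae_restrict_mem measurableSet_Ioi] with t ht
    exact mul_nonneg hC (Real.rpow_nonneg (hK.trans ht).le _)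

section WeakL2

variable {α : Type*} [MeasurableSpace α] {μ : Measure α} {g : α → ℝ} {C K : ℝ}

theorem restrict_setOf_le_sq_le_of_weakL4 {Ω : Set α} (hΩ : MeasurableSet Ω) {f : α → ℝ}
    (hweak : ∀ M : ℝ, 1 ≤ M → μ {x ∈ Ω | M ≤ |f x| ^ 4} ≤ ENNReal.ofReal (C / M)) {t : ℝ}
    (ht : 1 ≤ t) : μ.restrict Ω {x | t ≤ f x ^ 2} ≤ ENNReal.ofReal (C / t ^ 2) := by
  rw [Measure.restrict_apply' hΩ]
  convert hweak (t ^ 2) (one_le_pow₀ ht) using 2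
  ext x
  simp only [mem_inter_iff, mem_ofPred_eq]
  rw [show |f x| ^ 4 = (f x ^ 2) ^ 2 by rw [Even.pow_abs ⟨2, rfl⟩]; ring,
    pow_le_pow_iff_left₀ (by linarith) (sq_nonneg _) two_ne_zero]
  exact and_comm
theorem setLIntegral_setOf_le_le_of_weakL2 (hg : Measurable g) (hC : 0 ≤ C)
    (hweak : ∀ t, 1 ≤ t → μ {x | t ≤ g x} ≤ ENNReal.ofReal (C / t ^ 2)) (hK : 1 ≤ K) :
    ∫⁻ x in {x | K ≤ g x}, ENNReal.ofReal (g x) ∂μ ≤ ENNReal.ofReal (2 * C / K) := by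
  have hK0 : 0 < K := one_pos.trans_le hK
  have hE : MeasurableSet {x | K ≤ g x} := measurableSet_le measurable_const hg
  have hg0 : 0 ≤ᵐ[μ.restrict {x | K ≤ g x}] g := by
    filter_upwards [ae_restrict_mem hE] with x hx using hK0.le.trans hx
  rw [lintegral_eq_lintegral_meas_le _ hg0 hg.aemeasurable, ← Ioc_union_Ioi_eq_Ioi hK0.le]
  calc _ ≤ (∫⁻ t in Ioc 0 K, μ.restrict {x | K ≤ g x} {x | t ≤ g x})
          + ∫⁻ t in Ioi K, μ.restrict {x | K ≤ g x} {x | t ≤ g x} := lintegral_union_le _ _ _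
    _ ≤ (∫⁻ _ in Ioc 0 K, ENNReal.ofReal (C / K ^ 2))
          + ∫⁻ t in Ioi K, ENNReal.ofReal (C / t ^ 2) := by
        gcongr ?_ + ?_
        · refine setLIntegral_mono' measurableSet_Ioc fun t _ => ?_
          rw [Measure.restrict_apply' hE]
          exact (measure_mono inter_subset_right).trans (hweak K hK)
        · refine setLIntegral_mono' measurableSet_Ioi fun t ht => ?_
          exact (Measure.restrict_le_self _).trans (hweak t (hK.trans (le_of_lt ht)))
    _ = ENNReal.ofReal (2 * C / K) := by
        rw [setLIntegral_const, Real.volume_Ioc, lintegral_Ioi_ofReal_div_sq hC hK0,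
          sub_zero, ← ENNReal.ofReal_mul (by positivity),
          ← ENNReal.ofReal_add (by positivity) (by positivity)]
        congr 1
        field_simp
        ring

theorem setLIntegral_le_mul_add_mul_add (hg : Measurable g) (B : Set α) (L K : ℝ) :
    ∫⁻ x in B, ENNReal.ofReal (g x) ∂μ ≤ ENNReal.ofReal L * μ B
      + ENNReal.ofReal K * μ ({x | L ≤ g x} ∩ B)
      + ∫⁻ x in {x | K ≤ g x}, ENNReal.ofReal (g x) ∂μ := by
  have hL : MeasurableSet {x | L ≤ g x} := measurableSet_le measurable_const hg
  have hK : MeasurableSet {x | K ≤ g x} := measurableSet_le measurable_const hg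
  have hpt : ∀ x, ENNReal.ofReal (g x) ≤ ENNReal.ofReal L
      + {x | L ≤ g x}.indicator (fun _ => ENNReal.ofReal K) x
      + {x | K ≤ g x}.indicator (fun x => ENNReal.ofReal (g x)) x := by
    intro x
    by_cases hxK : K ≤ g x
    · simp [indicator_of_mem (show x ∈ {x | K ≤ g x} from hxK)]
    by_cases hxL : L ≤ g x
    · simp only [indicator_of_mem (show x ∈ {x | L ≤ g x} from hxL)]
      exact le_add_right (le_add_left (ENNReal.ofReal_le_ofReal (not_le.1 hxK).le))
    · exact le_add_right (le_add_right (ENNReal.ofReal_le_ofReal (not_le.1 hxL).le))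
  calc ∫⁻ x in B, ENNReal.ofReal (g x) ∂μ
      ≤ ∫⁻ x in B, (ENNReal.ofReal L + {x | L ≤ g x}.indicator (fun _ => ENNReal.ofReal K) x
          + {x | K ≤ g x}.indicator (fun x => ENNReal.ofReal (g x)) x) ∂μ := lintegral_mono hpt
    _ = ENNReal.ofReal L * μ B + ENNReal.ofReal K * μ ({x | L ≤ g x} ∩ B)
          + ∫⁻ x in B, {x | K ≤ g x}.indicator (fun x => ENNReal.ofReal (g x)) x ∂μ := by
        rw [lintegral_add_right _ ((hg.ennreal_ofReal).indicator hK), lintegral_add_left measurable_const,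
          setLIntegral_const, lintegral_indicator_const hL, Measure.restrict_apply hL]
    _ ≤ _ := by
        rw [← lintegral_indicator hK]
        exact add_le_add_right (setLIntegral_le_lintegral _ _) _

theorem ofReal_le_mul_measure_inter_of_le_setIntegral (hg : Measurable g) (hC : 0 ≤ C)
    (hweak : ∀ t, 1 ≤ t → μ {x | t ≤ g x} ≤ ENNReal.ofReal (C / t ^ 2))
    (hg0 : ∀ x, 0 ≤ g x) {B : Set α}
    {L V m : ℝ} (hL : 0 ≤ L) (hV : 0 ≤ V) (hm : 0 ≤ m) (hK : 1 ≤ K) (hBV : μ B ≤ ENNReal.ofReal V)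
    (hmass : L * V + 2 * C / K + m ≤ ∫ x in B, g x ∂μ) :
    ENNReal.ofReal m ≤ ENNReal.ofReal K * μ ({x | L ≤ g x} ∩ B) := by
  have hlow : ENNReal.ofReal L * μ B ≤ ENNReal.ofReal (L * V) := by
    rw [ENNReal.ofReal_mul hL]
    gcongr
  have hmass' : ENNReal.ofReal (L * V + 2 * C / K + m) ≤ ∫⁻ x in B, ENNReal.ofReal (g x) ∂μ := by
    refine ENNReal.ofReal_le_of_le_toReal (hmass.trans_eq ?_)
    exact integral_eq_lintegral_of_nonneg_ae (ae_of_all _ hg0) hg.aestronglyMeasurable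
  have key : ENNReal.ofReal (L * V) + ENNReal.ofReal (2 * C / K) + ENNReal.ofReal m
      ≤ ENNReal.ofReal (L * V) + ENNReal.ofReal (2 * C / K)
        + ENNReal.ofReal K * μ ({x | L ≤ g x} ∩ B) :=
    calc _ = ENNReal.ofReal (L * V + 2 * C / K + m) := by
          rw [ENNReal.ofReal_add (by positivity) hm, ENNReal.ofReal_add (by positivity) (by positivity)]
      _ ≤ ∫⁻ x in B, ENNReal.ofReal (g x) ∂μ := hmass'
      _ ≤ _ := setLIntegral_le_mul_add_mul_add hg B L K
      _ ≤ ENNReal.ofReal (L * V) + ENNReal.ofReal K * μ ({x | L ≤ g x} ∩ B)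
            + ENNReal.ofReal (2 * C / K) := by
          gcongr
          exact setLIntegral_setOf_le_le_of_weakL2 hg hC hweak hK
      _ = _ := add_right_comm _ _ _
  exact (ENNReal.add_le_add_iff_left (by finiteness)).1 key

theorem card_mul_le_of_pairwiseDisjoint (hg : Measurable g) (hC : 0 ≤ C)
    (hweak : ∀ t, 1 ≤ t → μ {x | t ≤ g x} ≤ ENNReal.ofReal (C / t ^ 2))
    (hg0 : ∀ x, 0 ≤ g x) {ι : Type*} {S : Finset ι}
    {B : ι → Set α} {L V m : ℝ} (hL : 1 ≤ L) (hV : 0 ≤ V) (hm : 0 ≤ m) (hK : 1 ≤ K)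
    (hBm : ∀ i ∈ S, MeasurableSet (B i)) (hBd : (S : Set ι).PairwiseDisjoint B)
    (hBV : ∀ i ∈ S, μ (B i) ≤ ENNReal.ofReal V)
    (hmass : ∀ i ∈ S, L * V + 2 * C / K + m ≤ ∫ x in B i, g x ∂μ) :
    S.card * m ≤ K * (C / L ^ 2) := by
  have hlevel : MeasurableSet {x | L ≤ g x} := measurableSet_le measurable_const hg
  have hcount : (S.card : ℝ≥0∞) * ENNReal.ofReal m ≤ ENNReal.ofReal K * ENNReal.ofReal (C / L ^ 2) :=
    calc (S.card : ℝ≥0∞) * ENNReal.ofReal m = ∑ i ∈ S, ENNReal.ofReal m := by simp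
      _ ≤ ∑ i ∈ S, ENNReal.ofReal K * μ ({x | L ≤ g x} ∩ B i) := Finset.sum_le_sum fun i hi =>
          ofReal_le_mul_measure_inter_of_le_setIntegral hg hC hweak hg0 (by linarith) hV hm hK
            (hBV i hi) (hmass i hi)
      _ = ENNReal.ofReal K * μ (⋃ i ∈ S, {x | L ≤ g x} ∩ B i) := by
          rw [← Finset.mul_sum, measure_biUnion_finset (hBd.mono fun i => inter_subset_right)
            fun i hi => hlevel.inter (hBm i hi)]
      _ ≤ ENNReal.ofReal K * μ {x | L ≤ g x} := by
          gcongr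
          exact iUnion₂_subset fun _ _ => inter_subset_left
      _ ≤ ENNReal.ofReal K * ENNReal.ofReal (C / L ^ 2) := by
          gcongr
          exact hweak L hL
  rw [← ENNReal.ofReal_natCast, ← ENNReal.ofReal_mul (Nat.cast_nonneg _),
    ← ENNReal.ofReal_mul (by linarith)] at hcount
  exact (ENNReal.ofReal_le_ofReal_iff (by positivity)).1 hcount

end WeakL2

/-- if `f` satisfies the weak-`L⁴` bound
`|{x ∈ Ω : |f|⁴ ≥ M}| ≤ C/M` for `M ≥ 1`, then for every `ε > 0` the set
`D_ε = {x ∈ Ω : liminf_{r→0⁺} r⁻¹ ∫_{B_r(x)} f² ≥ ε}` contains at most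
`2¹¹ C² π² / ε⁴` points. -/
theorem stmt4 (Ω : Set (EuclideanSpace ℝ (Fin 2))) (hΩ : MeasurableSet Ω)
    (f : EuclideanSpace ℝ (Fin 2) → ℝ) (hf : Measurable f)
    (C : ℝ) (hC : 1 ≤ C)
    (hweak : ∀ M : ℝ, 1 ≤ M →
      volume {x ∈ Ω | M ≤ |f x| ^ 4} ≤ ENNReal.ofReal (C / M))
    (ε : ℝ) (hε : 0 < ε) :
    ∀ S : Finset (EuclideanSpace ℝ (Fin 2)),
      (↑S ⊆ {x | x ∈ Ω ∧ ε ≤ Filter.liminf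
          (fun r : ℝ => (1/r) * ∫ y in Metric.ball x r ∩ Ω, (f y)^2)
          (nhdsWithin 0 (Set.Ioi 0))}) →
      (S.card : ℝ) ≤ 2^11 * C^2 * π^2 / ε^4 := by
  intro S hS
  have hC0 : 0 < C := by linarith
  obtain ⟨r, hr, hra, hdisj, hmass⟩ := S.exists_small_radius_of_le_liminf hε
    (lt_min (by positivity) (by positivity) : 0 < min (ε / (4 * π)) (16 * C / ε))
    fun x hx => (hS hx).2
  have hL : 1 ≤ ε / (4 * π * r) := by
    rw [le_div_iff₀ (by positivity), one_mul, ← le_div_iff₀' (by positivity)]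
    exact hra.trans (min_le_left _ _)
  have hK : 1 ≤ 16 * C / (ε * r) := by
    rw [le_div_iff₀ (by positivity), one_mul, ← le_div_iff₀' hε]
    exact hra.trans (min_le_right _ _)
  have hcount := card_mul_le_of_pairwiseDisjoint (μ := volume.restrict Ω) (V := π * r ^ 2)
    (m := ε * r / 8) (hf.pow_const 2) hC0.le
    (fun t ht => restrict_setOf_le_sq_le_of_weakL4 hΩ hweak ht) (fun x => sq_nonneg (f x))
    hL (by positivity) (by positivity) hK (fun _ _ => measurableSet_ball) hdisj
    (fun x _ => (Measure.restrict_le_self _).trans_eq (by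
      rw [EuclideanSpace.volume_ball_fin_two, ← ENNReal.ofReal_pow hr.le,
        ← ENNReal.ofReal_mul (by positivity), mul_comm]))
    (fun x hx => by
      rw [Measure.restrict_restrict measurableSet_ball]
      convert hmass x hx using 1
      field_simp
      ring)
  rw [le_div_iff₀ (by positivity)]
  calc (S.card : ℝ) * ε ^ 4 = S.card * (ε * r / 8) * (8 * ε ^ 3 / r) := by field_simp
    _ ≤ 16 * C / (ε * r) * (C / (ε / (4 * π * r)) ^ 2) * (8 * ε ^ 3 / r) := by gcongr
    _ = 2 ^ 11 * C ^ 2 * π ^ 2 := by field_simp; ring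
end

section
/- Let f ∈ C^α(ℝ^m) (i.e., f is Hölder continuous with exponent α ∈ (0,1] and seminorm [f]_α) and let A ⊆ ℝ^m be closed. Then for every β ≥ 0 there is a constant C(α, β) such that ∫_ℝ H^β(f^{-1}({t}) ∩ A) dt ≤ C·[f]_α·H^{α+β}(A), where H^s denotes s-dimensional Hausdorff measure. -/
/-! Cover `s` by countably many sets `t j` of diameter at most `r` with `∑ diam (t j) ^ (α + β)`
close to `μH[α + β] s`. The level set `f⁻¹{y} ∩ s` is covered by the `t j` with `y ∈ f '' t j`,
so its `β`-dimensional Hausdorff measure is at most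
`liminf_{r → 0} ∑ diam (t j) ^ β 1_{f '' t j}(y)`.
Since `|f '' t j| ≤ K diam (t j) ^ α`, each of these majorants integrates to at most
`K ∑ diam (t j) ^ (α + β)`, and Fatou's lemma gives the inequality with constant `1`. -/

open Real MeasureTheory Set NNReal ENNReal
open Filter Topology Metric

section HausdorffCovers

variable {X : Type*} [EMetricSpace X] [MeasurableSpace X] [BorelSpace X]

theorem exists_cover_tsum_ediam_rpow_lt {d : ℝ} {s : Set X} {c : ℝ≥0∞} (hc : μH[d] s < c)
    {r : ℝ≥0∞} (hr : 0 < r) :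
    ∃ t : ℕ → Set X, s ⊆ ⋃ n, t n ∧ (∀ n, ediam (t n) ≤ r) ∧
      ∑' n, ⨆ _ : (t n).Nonempty, ediam (t n) ^ d < c := by
  rw [Measure.hausdorffMeasure_apply] at hc
  simpa only [iInf_lt_iff, exists_prop] using (le_iSup₂ (f := fun r (_ : 0 < r) =>
    ⨅ (t : ℕ → Set X) (_ : s ⊆ ⋃ n, t n) (_ : ∀ n, ediam (t n) ≤ r),
      ∑' n, ⨆ _ : (t n).Nonempty, ediam (t n) ^ d) r hr).trans_lt hc

theorem hausdorffMeasure_preimage_singleton_inter_le_liminf {Y : Type*} {f : X → Y} {s : Set X}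
    {r : ℕ → ℝ≥0∞} (hr : Tendsto r atTop (𝓝 0)) {t : ℕ → ℕ → Set X}
    (hst : ∀ n, s ⊆ ⋃ j, t n j) (ht : ∀ n j, ediam (t n j) ≤ r n) {T : ℕ → ℕ → Set Y}
    (hT : ∀ n j, f '' t n j ⊆ T n j) {d : ℝ} (hd : 0 ≤ d) (y : Y) :
    μH[d] (f ⁻¹' {y} ∩ s) ≤
      liminf (fun n => ∑' j, (T n j).indicator (fun _ => ediam (t n j) ^ d) y) atTop := by
  -- Only pieces meeting the level set are used: an empty piece would cost `0 ^ 0 = 1` when `d = 0`.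
  have hcover : ∀ n, f ⁻¹' {y} ∩ s ⊆ ⋃ j : {j | y ∈ T n j}, t n j ∩ f ⁻¹' {y} := by
    rintro n x ⟨hxy, hxs⟩
    obtain ⟨j, hj⟩ := mem_iUnion.1 (hst n hxs)
    exact mem_iUnion.2 ⟨⟨j, hT n j ⟨x, hj, hxy⟩⟩, hj, hxy⟩
  refine (Measure.hausdorffMeasure_le_liminf_tsum d _ r hr
    (fun n (j : {j | y ∈ T n j}) => t n j ∩ f ⁻¹' {y})
    (Eventually.of_forall fun n j => (ediam_mono inter_subset_left).trans (ht n j))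
    (Eventually.of_forall hcover)).trans (liminf_le_liminf (Eventually.of_forall fun n => ?_))
  calc ∑' j : {j | y ∈ T n j}, ediam (t n j ∩ f ⁻¹' {y}) ^ d
      ≤ ∑' j : {j | y ∈ T n j}, ediam (t n j) ^ d :=
        ENNReal.tsum_le_tsum fun j => ENNReal.rpow_le_rpow (ediam_mono inter_subset_left) hd
    _ = ∑' j, (T n j).indicator (fun _ => ediam (t n j) ^ d) y :=
        tsum_subtype {j | y ∈ T n j} fun j => ediam (t n j) ^ d

end HausdorffCovers

theorem lintegral_tsum_indicator_const {Y ι : Type*} [MeasurableSpace Y] [Countable ι]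
    (μ : Measure Y) {T : ι → Set Y} (hT : ∀ j, MeasurableSet (T j)) (c : ι → ℝ≥0∞) :
    ∫⁻ y, ∑' j, (T j).indicator (fun _ => c j) y ∂μ = ∑' j, c j * μ (T j) := by
  rw [lintegral_tsum fun j => aemeasurable_const.indicator (hT j)]
  simp only [lintegral_indicator_const (hT _)]

theorem lintegral_measure_preimage_singleton_inter_eq_zero {X Y : Type*} [MeasurableSpace X]
    [MeasurableSpace Y] (ν : Measure X) (μ : Measure Y) [NullSingletonClass μ] {f : X → Y}
    (hf : ∀ x x', f x = f x') (s : Set X) :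
    ∫⁻ y, ν (f ⁻¹' {y} ∩ s) ∂μ = 0 := by
  have hnull : μ (range f) = 0 := Set.Subsingleton.measure_zero
    (by rintro _ ⟨x, rfl⟩ _ ⟨x', rfl⟩; exact hf x x') μ
  calc ∫⁻ y, ν (f ⁻¹' {y} ∩ s) ∂μ = ∫⁻ _, 0 ∂μ :=
        lintegral_congr_ae <| (measure_eq_zero_iff_ae_notMem.1 hnull).mono fun y hy => by
          simp [preimage_singleton_eq_empty.2 hy]
    _ = 0 := lintegral_zero

namespace HolderWith

variable {X : Type*} [EMetricSpace X] {f : X → ℝ} {K α β : ℝ≥0}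

theorem ediam_rpow_mul_volume_image_le (hf : HolderWith K α f) (t : Set X) :
    ediam t ^ (β : ℝ) * volume (f '' t) ≤ K * ⨆ _ : t.Nonempty, ediam t ^ ((α : ℝ) + β) := by
  rcases t.eq_empty_or_nonempty with rfl | ht
  · simp
  rw [iSup_pos ht, ENNReal.rpow_add_of_nonneg _ _ α.coe_nonneg β.coe_nonneg]
  calc ediam t ^ (β : ℝ) * volume (f '' t)
      ≤ ediam t ^ (β : ℝ) * (K * ediam t ^ (α : ℝ)) := by
        gcongr; exact (Real.volume_le_diam _).trans (hf.ediam_image_le t)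
    _ = K * (ediam t ^ (α : ℝ) * ediam t ^ (β : ℝ)) := by ring

theorem lintegral_hausdorffMeasure_preimage_inter_le_of_lt [MeasurableSpace X] [BorelSpace X]
    (hf : HolderWith K α f) {s : Set X} {c : ℝ≥0∞} (hc : μH[(α : ℝ) + β] s < c) :
    ∫⁻ y, μH[β] (f ⁻¹' {y} ∩ s) ≤ K * c := by
  choose t hst ht hsum using fun n : ℕ =>
    exists_cover_tsum_ediam_rpow_lt hc (ENNReal.inv_pos.2 (ENNReal.natCast_ne_top n))
  -- Measurable hulls of the images make the majorants `g n` measurable, as Fatou's lemma requires.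
  set T : ℕ → ℕ → Set ℝ := fun n j => toMeasurable volume (f '' t n j)
  set g : ℕ → ℝ → ℝ≥0∞ := fun n y => ∑' j, (T n j).indicator (fun _ => ediam (t n j) ^ (β : ℝ)) y
  have hg_meas : ∀ n, Measurable (g n) := fun n =>
    .tsum fun j => measurable_const.indicator (measurableSet_toMeasurable _ _)
  have hg_int : ∀ n, ∫⁻ y, g n y ≤ K * c := fun n => calc
    ∫⁻ y, g n y = ∑' j, ediam (t n j) ^ (β : ℝ) * volume (f '' t n j) := by
      simp only [g, T, measure_toMeasurable,
        lintegral_tsum_indicator_const volume fun j => measurableSet_toMeasurable _ _]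
    _ ≤ ∑' j, K * ⨆ _ : (t n j).Nonempty, ediam (t n j) ^ ((α : ℝ) + β) :=
      ENNReal.tsum_le_tsum fun j => hf.ediam_rpow_mul_volume_image_le _
    _ = K * ∑' j, ⨆ _ : (t n j).Nonempty, ediam (t n j) ^ ((α : ℝ) + β) := ENNReal.tsum_mul_left
    _ ≤ K * c := by gcongr; exact (hsum n).le
  calc ∫⁻ y, μH[β] (f ⁻¹' {y} ∩ s)
      ≤ ∫⁻ y, liminf (fun n => g n y) atTop := lintegral_mono fun y =>
        hausdorffMeasure_preimage_singleton_inter_le_liminf ENNReal.tendsto_inv_nat_nhds_zero hst ht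
          (fun n j => subset_toMeasurable _ _) β.coe_nonneg y
    _ ≤ liminf (fun n => ∫⁻ y, g n y) atTop := lintegral_liminf_le hg_meas
    _ ≤ K * c := liminf_le_of_frequently_le' (Frequently.of_forall hg_int)

theorem lintegral_hausdorffMeasure_preimage_inter_le [MeasurableSpace X] [BorelSpace X]
    (hf : HolderWith K α f) (s : Set X) :
    ∫⁻ y, μH[β] (f ⁻¹' {y} ∩ s) ≤ K * μH[(α : ℝ) + β] s := by
  rcases eq_or_ne K 0 with rfl | hK
  · rw [lintegral_measure_preimage_singleton_inter_eq_zero _ _ (fun x x' => by simpa using hf x x')]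
    exact zero_le
  refine le_of_forall_gt_imp_ge_of_dense fun c' hc' => ?_
  obtain ⟨c, hμc, hc⟩ := exists_between <| (ENNReal.lt_div_iff_mul_lt (.inl (by exact_mod_cast hK))
    (.inl ENNReal.coe_ne_top)).2 (by rwa [mul_comm])
  calc ∫⁻ y, μH[β] (f ⁻¹' {y} ∩ s)
      ≤ K * c := hf.lintegral_hausdorffMeasure_preimage_inter_le_of_lt hμc
    _ ≤ K * (c' / K) := by gcongr
    _ ≤ c' := ENNReal.mul_div_le

end HolderWith

theorem stmt5_general (α : ℝ≥0) (β : ℝ≥0) :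
    ∃ C : ℝ≥0, ∀ (m : ℕ) (f : EuclideanSpace ℝ (Fin m) → ℝ) (K : ℝ≥0),
      HolderWith K α f →
      ∀ A : Set (EuclideanSpace ℝ (Fin m)), IsClosed A →
        (∫⁻ t : ℝ, Measure.hausdorffMeasure (β : ℝ) (f ⁻¹' {t} ∩ A))
          ≤ (C : ℝ≥0∞) * (K : ℝ≥0∞)
            * Measure.hausdorffMeasure ((α : ℝ) + (β : ℝ)) A :=
  ⟨1, fun _ _ _ hf A _ => by simpa using hf.lintegral_hausdorffMeasure_preimage_inter_le A⟩

/-- coarea inequality for Hölder maps. For `f ∈ C^α(ℝ^m)` with Hölder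
seminorm `K` and `A ⊆ ℝ^m` closed, for every `β ≥ 0` there is `C(α,β)` with
`∫ H^β(f⁻¹{t} ∩ A) dt ≤ C K H^{α+β}(A)`. -/
theorem stmt5 (α : ℝ≥0) (hα : 0 < α) (hα1 : α ≤ 1) (β : ℝ≥0) :
    ∃ C : ℝ≥0, ∀ (m : ℕ) (f : EuclideanSpace ℝ (Fin m) → ℝ) (K : ℝ≥0),
      HolderWith K α f →
      ∀ A : Set (EuclideanSpace ℝ (Fin m)), IsClosed A →
        (∫⁻ t : ℝ, Measure.hausdorffMeasure (β : ℝ) (f ⁻¹' {t} ∩ A))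
          ≤ (C : ℝ≥0∞) * (K : ℝ≥0∞)
            * Measure.hausdorffMeasure ((α : ℝ) + (β : ℝ)) A :=
  stmt5_general α β
end

section
/- Let ν > 0 and let h(φ) = sin(ν(φ − π)) on [0, 2π]. Then h is odd under φ ↦ 2π−φ, solves h'' = −ν²h, and satisfies the Ventsel boundary condition h′(0) = −(π/2)(h(0)/4 + h''(0)) if and only if ν satisfies ν·cos(νπ) = (π/2)·(1/4 − ν²)·sin(νπ). Moreover ν = 1/2 is a solution of this equation, and there is no solution ν in the open interval (0, 1/2). -/
open Real Set

/-
The boundary condition at `φ = 0`, with `x = νπ`, becomes `Ψ x = 0` for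
`Ψ x = 8x cos x − (π² − 4x²) sin x`. Since `Ψ' x = (4x² + 8 − π²) cos x`, on `[0, π/2]` the
function `Ψ` strictly decreases up to `x₀ = √((π² − 8)/4)` and strictly increases afterwards;
as it vanishes at both ends `0` and `π/2`, it is negative in between.
-/

section SineMode

variable (a c : ℝ)

theorem hasDerivAt_mul_sub (x : ℝ) : HasDerivAt (fun ψ => a * (ψ - c)) a x := by
  simpa using ((hasDerivAt_id x).sub_const c).const_mul a

theorem deriv_sin_mul_sub :
    deriv (fun ψ => sin (a * (ψ - c))) = fun ψ => a * cos (a * (ψ - c)) :=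
  funext fun x => ((hasDerivAt_mul_sub a c x).sin.deriv).trans (mul_comm _ _)

theorem deriv_deriv_sin_mul_sub (x : ℝ) :
    deriv (deriv (fun ψ => sin (a * (ψ - c)))) x = -a ^ 2 * sin (a * (x - c)) := by
  rw [deriv_sin_mul_sub, ((hasDerivAt_mul_sub a c x).cos.const_mul a).deriv]
  ring

end SineMode

theorem neg_of_strictAntiOn_of_strictMonoOn {α β : Type*} [LinearOrder α] [Preorder β] [Zero β]
    {f : α → β} {a b c : α} (hac : a ≤ c) (hcb : c ≤ b)
    (ha : f a = 0) (hb : f b = 0) (hanti : StrictAntiOn f (Icc a c))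
    (hmono : StrictMonoOn f (Icc c b)) {x : α} (hx : x ∈ Ioo a b) : f x < 0 := by
  rcases le_or_gt x c with hxc | hcx
  · exact ha ▸ hanti ⟨le_rfl, hac⟩ ⟨hx.1.le, hxc⟩ hx.1
  · exact hb ▸ hmono ⟨hcx.le, hx.2.le⟩ ⟨hcb, le_rfl⟩ hx.2

noncomputable def ventselPsi (x : ℝ) : ℝ := 8 * x * cos x - (π ^ 2 - 4 * x ^ 2) * sin x

theorem continuous_ventselPsi : Continuous ventselPsi := by
  unfold ventselPsi; fun_prop

theorem hasDerivAt_ventselPsi (x : ℝ) :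
    HasDerivAt ventselPsi ((4 * x ^ 2 + 8 - π ^ 2) * cos x) x := by
  have hquad : HasDerivAt (fun x : ℝ => π ^ 2 - 4 * x ^ 2) (-(4 * (2 * x))) x := by
    simpa using ((hasDerivAt_pow 2 x).const_mul (4 : ℝ)).const_sub (π ^ 2)
  have h := (((hasDerivAt_id' x).const_mul (8 : ℝ)).mul (hasDerivAt_cos x)).sub
    (hquad.mul (hasDerivAt_sin x))
  exact h.congr_deriv (by ring)

theorem ventselPsi_neg {x : ℝ} (hx : x ∈ Ioo 0 (π / 2)) : ventselPsi x < 0 := by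
  have hpi : (8 : ℝ) < π ^ 2 := by nlinarith [pi_gt_three]
  set x₀ := √((π ^ 2 - 8) / 4)
  have hx₀pos : 0 < x₀ := sqrt_pos.mpr (by linarith)
  have hx₀sq : x₀ ^ 2 = (π ^ 2 - 8) / 4 := sq_sqrt (by linarith)
  have hx₀lt : x₀ < π / 2 := by nlinarith [pi_pos]
  have hcos {y : ℝ} (hy : y ∈ Ioo 0 (π / 2)) : 0 < cos y :=
    cos_pos_of_mem_Ioo ⟨by linarith [hy.1, pi_pos], hy.2⟩
  refine neg_of_strictAntiOn_of_strictMonoOn (f := ventselPsi) hx₀pos.le hx₀lt.le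
    (by simp [ventselPsi]) (by simp [ventselPsi]; ring) ?_ ?_ hx
  · refine strictAntiOn_of_deriv_neg (convex_Icc _ _) continuous_ventselPsi.continuousOn ?_
    intro y hy
    rw [interior_Icc] at hy
    rw [(hasDerivAt_ventselPsi y).deriv]
    have hc := hcos ⟨hy.1, hy.2.trans hx₀lt⟩
    have : 4 * y ^ 2 + 8 - π ^ 2 < 0 := by nlinarith [hy.1, hy.2]
    exact mul_neg_of_neg_of_pos this hc
  · refine strictMonoOn_of_deriv_pos (convex_Icc _ _) continuous_ventselPsi.continuousOn ?_
    intro y hy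
    rw [interior_Icc] at hy
    rw [(hasDerivAt_ventselPsi y).deriv]
    have hc := hcos ⟨hx₀pos.trans hy.1, hy.2⟩
    have : 0 < 4 * y ^ 2 + 8 - π ^ 2 := by nlinarith [hy.1, hy.2]
    exact mul_pos this hc

theorem ventsel_eq_iff_ventselPsi_eq_zero (ν : ℝ) :
    ν * cos (ν * π) = (π / 2) * (1 / 4 - ν ^ 2) * sin (ν * π) ↔ ventselPsi (ν * π) = 0 := by
  unfold ventselPsi
  constructor <;> intro h
  · linear_combination (8 * π) * h
  · apply mul_left_cancel₀ (mul_ne_zero (by norm_num : (8 : ℝ) ≠ 0) pi_ne_zero)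
    linear_combination h

/-- `h(φ) = sin(ν(φ−π))` is odd under `φ ↦ 2π−φ`, solves `h″ = −ν² h`,
satisfies the Ventsel condition `h′(0) = −(π/2)(h(0)/4 + h″(0))` iff
`ν cos(νπ) = (π/2)(1/4 − ν²) sin(νπ)`; moreover `ν = 1/2` solves this equation and
there is no solution in `(0, 1/2)`. -/
theorem stmt8 (ν : ℝ) (hν : 0 < ν) :
    (∀ φ : ℝ, Real.sin (ν * ((2*π - φ) - π)) = - Real.sin (ν * (φ - π))) ∧
    (∀ φ : ℝ, deriv (deriv (fun ψ => Real.sin (ν * (ψ - π)))) φ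
        = -ν^2 * Real.sin (ν * (φ - π))) ∧
    ((deriv (fun ψ => Real.sin (ν * (ψ - π))) 0
        = -(π/2) * (Real.sin (ν * ((0:ℝ) - π)) / 4
            + deriv (deriv (fun ψ => Real.sin (ν * (ψ - π)))) 0))
      ↔ ν * Real.cos (ν * π) = (π/2) * (1/4 - ν^2) * Real.sin (ν * π)) ∧
    ((1/2 : ℝ) * Real.cos ((1/2 : ℝ) * π)
        = (π/2) * (1/4 - (1/2:ℝ)^2) * Real.sin ((1/2 : ℝ) * π)) ∧
    (ν < 1/2 → ¬ (ν * Real.cos (ν * π) = (π/2) * (1/4 - ν^2) * Real.sin (ν * π))) := by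
  refine ⟨fun φ => ?_, deriv_deriv_sin_mul_sub ν π, ?_, ?_, fun hlt => ?_⟩
  · rw [show ν * ((2 * π - φ) - π) = -(ν * (φ - π)) by ring, sin_neg]
  · rw [deriv_deriv_sin_mul_sub, deriv_sin_mul_sub]
    simp only [zero_sub, mul_neg, sin_neg, cos_neg]
    constructor <;> intro h <;> linear_combination h
  · rw [show (1 / 2 : ℝ) * π = π / 2 by ring, cos_pi_div_two]
    ring
  · rw [ventsel_eq_iff_ventselPsi_eq_zero]
    exact (ventselPsi_neg ⟨by positivity, by nlinarith [pi_pos]⟩).ne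
end

section
/- Let g₁(ω) = (ω + √(ω² − 3))² and g₂(ω) = 4·sin(7π/6 − ωπ/2) − 3 on the interval I = (√3, ω₀), where ω₀ = 7/3 − (2/π)·arcsin(3/4). Then g₁·g₂ < 1 on I. -/
open Real

set_option maxHeartbeats 1000000

private lemma aux10 (ω x c1 c2 C r b : ℝ)
    (hω : 0 < ω) (hωb : ω ≤ b)
    (hc1 : 0 ≤ c1) (hx1 : c1 < x) (hx2 : x < c2) (hc2 : c2 ≤ 1)
    (hC : 1 - c1^2/2 + c2^4*(5/96) ≤ C)
    (hr : 0 < r) (hrb : b^2 - 3 < r^2)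
    (hfin : (b + r)^2 * (4*C - 3) ≤ 1)
    (hcos : 3/4 < Real.cos x) :
    (ω + Real.sqrt (ω^2 - 3))^2 * (4 * Real.cos x - 3) < 1 := by
  have hxpos : 0 < x := lt_of_le_of_lt hc1 hx1
  have hs0 : 0 ≤ Real.sqrt (ω^2 - 3) := Real.sqrt_nonneg _
  have hsr : Real.sqrt (ω^2 - 3) < r := by
    refine lt_of_le_of_lt (Real.sqrt_le_sqrt (by nlinarith : ω^2 - 3 ≤ b^2 - 3)) ?_
    exact (Real.sqrt_lt' hr).mpr hrb
  have habs : |x| = x := abs_of_pos hxpos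
  have h := Real.cos_bound (x := x) (by rw [habs]; linarith)
  rw [habs] at h
  have h' := (abs_le.mp h).2
  have h2 : c1^2 < x^2 := by nlinarith
  have h4 : x^4 < c2^4 := pow_lt_pow_left₀ hx2 hxpos.le (by norm_num)
  have hcC : Real.cos x < C := by linarith
  have hM : ω + Real.sqrt (ω^2 - 3) < b + r := by linarith
  have hsq : (ω + Real.sqrt (ω^2 - 3))^2 < (b + r)^2 := by nlinarith
  have hkey := mul_lt_mul'' hsq (by linarith : 4*Real.cos x - 3 < 4*C - 3)
    (sq_nonneg _) (by linarith)
  linarith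

/-- with `g₁(ω) = (ω + √(ω²−3))²` and `g₂(ω) = 4 sin(7π/6 − ωπ/2) − 3`,
one has `g₁ g₂ < 1` on the interval `I = (√3, ω₀)` where
`ω₀ = 7/3 − (2/π) arcsin(3/4)`. -/
theorem stmt10 (ω : ℝ)
    (hω : ω ∈ Set.Ioo (Real.sqrt 3) (7/3 - (2/π) * Real.arcsin (3/4))) :
    (ω + Real.sqrt (ω^2 - 3))^2 * (4 * Real.sin (7*π/6 - ω*π/2) - 3) < 1 := by
  obtain ⟨hωl, hωu⟩ := hω
  have hπl : (3.141592 : ℝ) < π := Real.pi_gt_d6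
  have hπu : π < 3.141593 := Real.pi_lt_d6
  have hs3l : (1.7320508 : ℝ) < Real.sqrt 3 := by
    have : (1.7320508 : ℝ) = Real.sqrt (1.7320508^2) := (Real.sqrt_sq (by norm_num)).symm
    rw [this]
    exact Real.sqrt_lt_sqrt (by positivity) (by norm_num)
  -- arcsin bound : 4π/15 < arcsin (3/4)
  have hsin : Real.sin (4*π/15) < 3/4 := by
    have e : (4*π/15 : ℝ) = π/2 - 7*π/30 := by ring
    rw [e, Real.sin_pi_div_two_sub]
    have ht1 : (0.7330381:ℝ) < 7*π/30 := by linarith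
    have ht2 : 7*π/30 < (0.7330384:ℝ) := by linarith
    have habs : |(7*π/30:ℝ)| = 7*π/30 := abs_of_pos (by linarith)
    have h := Real.cos_bound (x := 7*π/30) (by rw [habs]; linarith)
    rw [habs] at h
    have h' := (abs_le.mp h).2
    have p2 : (0.53734485:ℝ) < (7*π/30)^2 := by nlinarith
    have p4 : (7*π/30)^4 < (0.28873997:ℝ) :=
      lt_of_lt_of_le (pow_lt_pow_left₀ ht2 (by linarith) (by norm_num)) (by norm_num)
    nlinarith
  have harcs : 4*π/15 < Real.arcsin (3/4) :=
    (Real.lt_arcsin_iff_sin_lt ⟨by linarith, by linarith⟩ (by norm_num)).mpr hsin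
  have hω18 : ω < 1.8 := by
    have h1 : (2/π) * (4*π/15) < (2/π) * Real.arcsin (3/4) :=
      mul_lt_mul_of_pos_left harcs (by positivity)
    have h2 : (2/π) * (4*π/15) = 8/15 := by
      field_simp
      ring
    rw [h2] at h1
    linarith
  have e : 7*π/6 - ω*π/2 = π/2 - (ω*π/2 - 2*π/3) := by ring
  rw [e, Real.sin_pi_div_two_sub]
  set x := ω*π/2 - 2*π/3 with hxdef
  rcases le_or_gt (Real.cos x) (3/4) with hg | hg
  · have hnp : (ω + Real.sqrt (ω^2 - 3))^2 * (4 * Real.cos x - 3) ≤ 0 :=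
      mul_nonpos_of_nonneg_of_nonpos (sq_nonneg _) (by linarith)
    linarith
  · rcases le_or_gt ω 1.74 with hb | hc
    · have hx1 : (0.6263038:ℝ) < x := by
        have h := mul_lt_mul_of_pos_right (lt_trans hs3l hωl) Real.pi_pos
        linarith [hπl, hπu]
      have hx2 : x < (0.6387906:ℝ) := by
        have h := mul_le_mul_of_nonneg_right hb Real.pi_pos.le
        linarith [hπl, hπu]
      exact aux10 ω x 0.6263038 0.6387906 0.8125441 0.166133 1.74 (by linarith) hb
        (by norm_num) hx1 hx2 (by norm_num) (by norm_num) (by norm_num) (by norm_num) (by norm_num) hg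
    · rcases le_or_gt ω 1.758 with hb | hc
      · have hx1 : (0.6387903:ℝ) < x := by
          have h := mul_lt_mul_of_pos_right hc Real.pi_pos
          linarith [hπl, hπu]
        have hx2 : x < (0.667065:ℝ) := by
          have h := mul_le_mul_of_nonneg_right hb Real.pi_pos.le
          linarith [hπl, hπu]
        exact aux10 ω x 0.6387903 0.667065 0.8062862 0.300939 1.758 (by linarith) hb
          (by norm_num) hx1 hx2 (by norm_num) (by norm_num) (by norm_num) (by norm_num) (by norm_num) hg
      · rcases le_or_gt ω 1.775 with hb | hc
        · have hx1 : (0.6670647:ℝ) < x := by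
            have h := mul_lt_mul_of_pos_right hc Real.pi_pos
            linarith [hπl, hπu]
          have hx2 : x < (0.6937685:ℝ) := by
            have h := mul_le_mul_of_nonneg_right hb Real.pi_pos.le
            linarith [hπl, hπu]
          exact aux10 ω x 0.6670647 0.6937685 0.7895782 0.388105 1.775 (by linarith) hb
            (by norm_num) hx1 hx2 (by norm_num) (by norm_num) (by norm_num) (by norm_num) (by norm_num) hg
        · rcases le_or_gt ω 1.79 with hb | hc
          · have hx1 : (0.6937682:ℝ) < x := by
              have h := mul_lt_mul_of_pos_right hc Real.pi_pos
              linarith [hπl, hπu]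
            have hx2 : x < (0.7173305:ℝ) := by
              have h := mul_le_mul_of_nonneg_right hb Real.pi_pos.le
              linarith [hπl, hπu]
            exact aux10 ω x 0.6937682 0.7173305 0.7731333 0.451775 1.79 (by linarith) hb
              (by norm_num) hx1 hx2 (by norm_num) (by norm_num) (by norm_num) (by norm_num) (by norm_num) hg
          · have hx1 : (0.7173301:ℝ) < x := by
              have h := mul_lt_mul_of_pos_right hc Real.pi_pos
              linarith [hπl, hπu]
            have hx2 : x < (0.7330384:ℝ) := by
              have h := mul_le_mul_of_nonneg_right hω18.le Real.pi_pos.le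
              linarith [hπl, hπu]
            exact aux10 ω x 0.7173301 0.7330384 0.7577574 0.489898 1.8 (by linarith) hω18.le
              (by norm_num) hx1 hx2 (by norm_num) (by norm_num) (by norm_num) (by norm_num) (by norm_num) hg
end
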